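/- Let p be an odd prime, q a power of p, and n ≥ 1 with p dividing n. Let f, g ∈ F_q[T] with f of degree 1 and g a nonzero constant, p ∤ (leading coefficient of f)·g. Let w_n be the Lucas-type sequence w_0 = 2, w_1 = f, w_n = f·w_{n-1} + g·w_{n-2}. Then w_n(T) is a perfect power in F_q[T] if and only if p divides n. -/

import Mathlib

open Polynomial

noncomputable def lucasw {R : Type*} [CommRing R] (f g : Polynomial R) : ℕ → Polynomial R
  | 0 => 2
  | 1 => f
  | n + 2 => f * lucasw f g (n + 1) + g * lucasw f g n

/-!
Adjoin a root `α` of `X² - f X - g` and let `β = f - α` be its conjugate. Then `w n = αⁿ + βⁿ`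
and `(α - β) u n = αⁿ - βⁿ` for the companion sequence `u`. In characteristic `p` the first
identity gives `w (p m) = (w m) ^ p`. The two together give `w n ² - (f² + 4 g) u n ² = 4 (-g)ⁿ`,
and moreover `(w n)' = n f' u n`. So if `p ∤ n`, a square factor of `w n` divides `w n`, its
derivative, hence `u n`, hence the unit `4 (-g)ⁿ`: `w n` is squarefree, and of degree `n ≥ 1`,
so it is not a proper power.
-/

noncomputable def lucasu {R : Type*} [CommRing R] (f g : R[X]) : ℕ → R[X]
  | 0 => 0
  | 1 => 1
  | n + 2 => f * lucasu f g (n + 1) + g * lucasu f g n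

theorem AdjoinRoot.of_injective_of_monic {R : Type*} [CommRing R] {P : R[X]} (hP : P.Monic)
    (hdeg : 0 < P.natDegree) : Function.Injective (AdjoinRoot.of P) := by
  rw [injective_iff_map_eq_zero]
  intro a ha
  rw [AdjoinRoot.of, RingHom.comp_apply, AdjoinRoot.mk_eq_zero] at ha
  by_contra h
  exact hP.not_dvd_of_natDegree_lt (C_ne_zero.mpr h) (by rwa [natDegree_C]) ha

section CommRing

variable {R : Type*} [CommRing R] (f g : R[X])

@[simp] theorem lucasw_zero : lucasw f g 0 = 2 := rfl
@[simp] theorem lucasw_one : lucasw f g 1 = f := rfl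
theorem lucasw_add_two (n : ℕ) :
    lucasw f g (n + 2) = f * lucasw f g (n + 1) + g * lucasw f g n := rfl
@[simp] theorem lucasu_zero : lucasu f g 0 = 0 := rfl
@[simp] theorem lucasu_one : lucasu f g 1 = 1 := rfl
theorem lucasu_add_two (n : ℕ) :
    lucasu f g (n + 2) = f * lucasu f g (n + 1) + g * lucasu f g n := rfl

theorem lucasw_succ_eq (n : ℕ) :
    lucasw f g (n + 1) = f * lucasu f g (n + 1) + 2 * g * lucasu f g n := by
  induction n using Nat.twoStepInduction with
  | zero => simp
  | one => simp [lucasw_add_two, lucasu_add_two]; ring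
  | more n ih₀ ih₁ =>
    rw [lucasw_add_two, ih₀, ih₁, lucasu_add_two f g (n + 1), lucasu_add_two]
    ring

theorem derivative_lucasw (hg : derivative g = 0) (n : ℕ) :
    derivative (lucasw f g n) = n * derivative f * lucasu f g n := by
  induction n using Nat.twoStepInduction with
  | zero => simp
  | one => simp
  | more n ih₀ ih₁ =>
    rw [lucasw_add_two, lucasu_add_two, derivative_add, derivative_mul, derivative_mul, hg, ih₀,
      ih₁]
    push_cast
    linear_combination derivative f * lucasw_succ_eq f g n

noncomputable abbrev lucasCharPoly : R[X][X] := X ^ 2 - C f * X - C g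

theorem lucasCharPoly_monic : (lucasCharPoly f g).Monic := by
  unfold lucasCharPoly
  rw [sub_sub]
  exact monic_X_pow_sub degree_linear_lt

local notation "ι" => AdjoinRoot.of (lucasCharPoly f g)
local notation "α" => AdjoinRoot.root (lucasCharPoly f g)

theorem lucasCharPoly_natDegree [Nontrivial R] : (lucasCharPoly f g).natDegree = 2 := by
  unfold lucasCharPoly
  compute_degree!

theorem of_lucasCharPoly_injective : Function.Injective ι := by
  cases subsingleton_or_nontrivial R
  · exact Function.injective_of_subsingleton _
  · exact AdjoinRoot.of_injective_of_monic (lucasCharPoly_monic f g)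
      (by rw [lucasCharPoly_natDegree]; norm_num)

local notation "β" => ι f - α

theorem root_mul_conj : α * β = -ι g := by
  have h := AdjoinRoot.eval₂_root (lucasCharPoly f g)
  simp only [eval₂_sub, eval₂_mul, eval₂_pow, eval₂_X, eval₂_C] at h
  linear_combination -h

theorem of_lucasw (n : ℕ) : ι (lucasw f g n) = α ^ n + β ^ n := by
  induction n using Nat.twoStepInduction with
  | zero => rw [lucasw_zero, map_ofNat]; ring
  | one => simp
  | more n ih₀ ih₁ =>
    rw [lucasw_add_two, map_add, map_mul, map_mul, ih₀, ih₁]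
    linear_combination (α ^ n + β ^ n) * root_mul_conj f g

theorem of_lucasu_mul (n : ℕ) : ι (lucasu f g n) * (α - β) = α ^ n - β ^ n := by
  induction n using Nat.twoStepInduction with
  | zero => simp
  | one => simp
  | more n ih₀ ih₁ =>
    rw [lucasu_add_two, map_add, map_mul, map_mul]
    linear_combination ι f * ih₁ + ι g * ih₀ + (α ^ n - β ^ n) * root_mul_conj f g

theorem lucasw_sq_sub_mul_lucasu_sq (n : ℕ) :
    lucasw f g n ^ 2 - (f ^ 2 + 4 * g) * lucasu f g n ^ 2 = 4 * (-g) ^ n := by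
  apply of_lucasCharPoly_injective f g
  simp only [map_sub, map_mul, map_pow, map_add, map_ofNat, map_neg, of_lucasw]
  rw [show ι g = -(α * β) by linear_combination root_mul_conj f g, neg_neg, mul_pow]
  have hu := of_lucasu_mul f g n
  linear_combination (-(ι (lucasu f g n) * (α - β) + (α ^ n - β ^ n))) * hu

theorem lucasw_mul_of_charP (p : ℕ) [Fact p.Prime] [CharP R p] (m : ℕ) :
    lucasw f g (p * m) = lucasw f g m ^ p := by
  have := charP_of_injective_ringHom (of_lucasCharPoly_injective f g) p
  apply of_lucasCharPoly_injective f g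
  rw [map_pow, of_lucasw, of_lucasw, mul_comm, pow_mul, pow_mul, add_pow_char]

end CommRing

theorem degree_lucasw {R : Type*} [CommRing R] [NoZeroDivisors R] (h2 : (2 : R) ≠ 0)
    {f : R[X]} (hf : f.degree = 1) (g : R) (n : ℕ) : (lucasw f (C g) n).degree = n := by
  induction n using Nat.twoStepInduction with
  | zero => rw [lucasw_zero, ← C_ofNat, degree_C h2, Nat.cast_zero]
  | one => rw [lucasw_one, hf, Nat.cast_one]
  | more n ih₀ ih₁ =>
    have hlead : (f * lucasw f (C g) (n + 1)).degree = ↑(n + 2) := by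
      rw [degree_mul, hf, ih₁]; norm_cast; omega
    have htail : (C g * lucasw f (C g) n).degree < ↑(n + 2) :=
      calc (C g * lucasw f (C g) n).degree ≤ 0 + n := by
            grw [degree_mul_le, degree_C_le, ih₀]
        _ < ↑(n + 2) := by norm_cast; omega
    rw [lucasw_add_two, degree_add_eq_left_of_degree_lt (hlead ▸ htail), hlead]

theorem squarefree_lucasw {R : Type*} [CommRing R] {f : R[X]} (hf : IsUnit (derivative f))
    {g : R} (hg : IsUnit g) (h2 : IsUnit (2 : R)) {n : ℕ} (hn : IsUnit (n : R)) :
    Squarefree (lucasw f (C g) n) := by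
  intro x hx
  have hw : x ∣ lucasw f (C g) n := (dvd_mul_right x x).trans hx
  have hw' : x ∣ derivative (lucasw f (C g) n) := by
    simpa using pow_sub_one_dvd_derivative_of_pow_dvd (n := 2) (by rwa [sq])
  have hu : x ∣ lucasu f (C g) n := by
    rw [derivative_lucasw f (C g) derivative_C, ← map_natCast C] at hw'
    exact ((isUnit_C.mpr hn).mul hf).dvd_mul_left.mp hw'
  have hconst : x ∣ C (4 * (-g) ^ n) := by
    have := lucasw_sq_sub_mul_lucasu_sq f (C g) n
    simp only [← C_neg, ← C_pow, ← C_ofNat, ← C_mul] at this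
    rw [← this]
    exact dvd_sub (dvd_pow hw two_ne_zero) ((dvd_pow hu two_ne_zero).mul_left _)
  refine isUnit_of_dvd_unit hconst (isUnit_C.mpr ?_)
  rw [show (4 : R) = 2 * 2 by norm_num]
  exact (h2.mul h2).mul (hg.neg.pow n)

theorem isUnit_derivative_of_degree_eq_one {K : Type*} [Field K] {f : K[X]} (hf : f.degree = 1) :
    IsUnit (derivative f) := by
  rw [eq_X_add_C_of_degree_eq_one hf]
  simpa using leadingCoeff_ne_zero.mpr (ne_zero_of_degree_gt (n := 0) (by rw [hf]; norm_num))

theorem lucasw_perfect_power_iff_general (p : ℕ) [Fact p.Prime] (hp : Odd p)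
    (F : Type*) [Field F] [CharP F p]
    (f : Polynomial F) (hf : f.degree = 1) (g : F) (hg : g ≠ 0)
    (n : ℕ) :
    (∃ (u : Polynomial F) (j : ℕ), 1 < j ∧ lucasw f (C g) n = u ^ j) ↔ p ∣ n := by
  have h2 : (2 : F) ≠ 0 := Ring.two_ne_zero <| by
    rw [ringChar.eq F p]
    rintro rfl
    exact Nat.not_even_iff_odd.mpr hp even_two
  constructor
  · rintro ⟨u, j, hj, hu⟩
    by_contra hpn
    have hnF : (n : F) ≠ 0 := mt (CharP.cast_eq_zero_iff F p n).mp hpn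
    have hsq : Squarefree (u ^ j) := hu ▸ squarefree_lucasw
      (isUnit_derivative_of_degree_eq_one hf) hg.isUnit h2.isUnit hnF.isUnit
    have hunit : IsUnit u := by
      by_contra h
      have := hsq.eq_zero_or_one_of_pow_of_not_isUnit h
      omega
    have hdeg := degree_lucasw h2 hf g n
    rw [hu, degree_eq_zero_of_isUnit (hunit.pow j), eq_comm, Nat.cast_eq_zero] at hdeg
    exact hpn (hdeg ▸ dvd_zero p)
  · rintro ⟨m, rfl⟩
    exact ⟨_, p, (Fact.out : p.Prime).one_lt, lucasw_mul_of_charP f (C g) p m⟩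

theorem lucasw_perfect_power_iff (p : ℕ) [Fact p.Prime] (hp : Odd p)
    (F : Type*) [Field F] [Fintype F] [CharP F p]
    (f : Polynomial F) (hf : f.degree = 1) (g : F) (hg : g ≠ 0)
    (hlc : f.leadingCoeff * g ≠ 0)
    (n : ℕ) (hn : 1 ≤ n) :
    (∃ (u : Polynomial F) (j : ℕ), 1 < j ∧ lucasw f (C g) n = u ^ j) ↔ p ∣ n :=
  lucasw_perfect_power_iff_general p hp F f hf g hg n
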